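/- Let h ≥ 2, let (W_i)_{i=0}^{h-1} be a partition of the nonnegative integers into nonempty pairwise disjoint sets, and let (g_i)_{i=0}^∞ be a G-adic sequence. Then the set A = {0} ∪ ⋃_{i=0}^{h-1} A_G(W_i) is not a minimal asymptotic basis of order h: the proper subset A \ {0} is still an asymptotic basis of order h. -/

import Mathlib

open Finset

/-- A `𝒢`-adic sequence: strictly increasing, `g 0 = 1`, and `g i ∣ g (i+1)` for all `i`. -/
def GadicSeq (g : ℕ → ℕ) : Prop :=
  StrictMono g ∧ g 0 = 1 ∧ ∀ i, g i ∣ g (i + 1)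

/-- The set `A_𝒢(W)` of positive integers `∑_{j ∈ F} x j * g j` with `F` a nonempty finite
subset of `W` and `x j ∈ [1, d_{j+1} - 1]` where `d_{j+1} = g (j+1) / g j`. -/
def AG (g : ℕ → ℕ) (W : Set ℕ) : Set ℕ :=
  { n | ∃ (F : Finset ℕ) (x : ℕ → ℕ), F.Nonempty ∧ ↑F ⊆ W ∧
        (∀ j ∈ F, 1 ≤ x j ∧ x j ≤ g (j + 1) / g j - 1) ∧
        n = ∑ j ∈ F, x j * g j }

/-- `n` is a sum of `h` (not necessarily distinct) elements of `A`. -/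
def IsSumOf (A : Set ℕ) (h n : ℕ) : Prop :=
  ∃ f : Fin h → ℕ, (∀ i, f i ∈ A) ∧ n = ∑ i, f i

/-- `A` is an asymptotic basis of order `h`. -/
def AsympBasis (h : ℕ) (A : Set ℕ) : Prop :=
  ∃ N, ∀ n ≥ N, IsSumOf A h n

/-- `A` is a minimal asymptotic basis of order `h`. -/
def MinAsympBasis (h : ℕ) (A : Set ℕ) : Prop :=
  AsympBasis h A ∧ ∀ B ⊂ A, ¬ AsympBasis h B

/-!
Every `n` has a `𝒢`-adic expansion `n = ∑ x_j g_j` with digits `0 ≤ x_j < d_{j+1}`. Grouping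
the nonzero digits according to the part `W_i` containing `j` writes `n` as a sum of at most `h`
elements of `A \ {0} = ⋃ A_𝒢(W_i)`. Every element `a ≥ 2` of this union is the sum of two of its
elements: split off one digit, or write `x g_j = g_j + (x - 1) g_j`, or
`g_{j+1} = g_j + (d_{j+1} - 1) g_j`. Splitting summands one at a time, every `n ≥ h` becomes a
sum of exactly `h` elements of `A \ {0}`, so `0` is not needed.
-/

namespace GadicSeq

variable {g : ℕ → ℕ}

theorem pos (hg : GadicSeq g) (j : ℕ) : 0 < g j :=
  lt_of_lt_of_le (by rw [hg.2.1]; exact one_pos) (hg.1.monotone (Nat.zero_le j))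

theorem two_le_div (hg : GadicSeq g) (j : ℕ) : 2 ≤ g (j + 1) / g j := by
  obtain ⟨d, hd⟩ := hg.2.2 j
  have hlt : g j < g j * d := hd ▸ hg.1 j.lt_succ_self
  rw [hd, Nat.mul_div_cancel_left _ (hg.pos j)]
  by_contra! hd2
  interval_cases d <;> simp at hlt

end GadicSeq

def gadicDigit (g : ℕ → ℕ) (n j : ℕ) : ℕ :=
  n / g j % (g (j + 1) / g j)

theorem gadicDigit_le {g : ℕ → ℕ} (hg : GadicSeq g) (n j : ℕ) :
    gadicDigit g n j ≤ g (j + 1) / g j - 1 :=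
  Nat.le_sub_one_of_lt (Nat.mod_lt _ (by linarith [hg.two_le_div j]))

theorem sum_gadicDigit_mul {g : ℕ → ℕ} (hg : GadicSeq g) (n m : ℕ) :
    ∑ j ∈ range m, gadicDigit g n j * g j = n % g m := by
  induction m with
  | zero => simp [hg.2.1, Nat.mod_one]
  | succ m ih =>
    rw [sum_range_succ, ih, ← Nat.mul_div_cancel' (hg.2.2 m), Nat.mod_mul, gadicDigit, mul_comm]

theorem sum_gadicDigit_mul_eq_self {g : ℕ → ℕ} (hg : GadicSeq g) (n : ℕ) :
    ∑ j ∈ range (n + 1), gadicDigit g n j * g j = n := by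
  rw [sum_gadicDigit_mul hg, Nat.mod_eq_of_lt (hg.1.le_apply (x := n + 1))]

section AG

variable {g : ℕ → ℕ} {W : Set ℕ}

theorem mul_mem_AG {j y : ℕ} (hj : j ∈ W) (hy : 1 ≤ y) (hy' : y ≤ g (j + 1) / g j - 1) :
    y * g j ∈ AG g W :=
  ⟨{j}, fun _ => y, singleton_nonempty j, by simpa using hj,
    fun k hk => by rw [mem_singleton.1 hk]; exact ⟨hy, hy'⟩, by rw [sum_singleton]⟩

theorem sum_mem_AG_of_ne_zero {S : Finset ℕ} {x : ℕ → ℕ} (hS : ↑S ⊆ W)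
    (hx : ∀ j ∈ S, x j ≤ g (j + 1) / g j - 1) (hne : ∑ j ∈ S, x j * g j ≠ 0) :
    ∑ j ∈ S, x j * g j ∈ AG g W := by
  classical
  refine ⟨{j ∈ S | x j * g j ≠ 0}, x, ?_, ?_, fun j hj => ?_, (sum_filter_ne_zero S).symm⟩
  · rw [← sum_filter_ne_zero] at hne
    exact nonempty_of_sum_ne_zero hne
  · exact fun j hj => hS (filter_subset _ S hj)
  · obtain ⟨hjS, hj0⟩ := mem_filter.1 hj
    exact ⟨Nat.one_le_iff_ne_zero.2 (left_ne_zero_of_mul hj0), hx j hjS⟩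

theorem pos_of_mem_AG (hg : GadicSeq g) {a : ℕ} (ha : a ∈ AG g W) : 0 < a := by
  obtain ⟨F, x, ⟨j, hj⟩, -, hx, rfl⟩ := ha
  exact lt_of_lt_of_le (Nat.mul_pos (hx j hj).1 (hg.pos j))
    (single_le_sum (fun i _ => Nat.zero_le (x i * g i)) hj)

end AG

section Splitting

variable {g : ℕ → ℕ} {ι : Type*} {W : ι → Set ℕ}

theorem exists_add_eq_mul_of_mem (hg : GadicSeq g) (hW : ⋃ i, W i = Set.univ) {i : ι}
    {j y : ℕ} (hj : j ∈ W i) (hy : 1 ≤ y) (hy' : y ≤ g (j + 1) / g j - 1) (h2 : 2 ≤ y * g j) :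
    ∃ b ∈ ⋃ i, AG g (W i), ∃ c ∈ ⋃ i, AG g (W i), b + c = y * g j := by
  rcases Nat.lt_or_ge 1 y with hy2 | hy1
  · refine ⟨1 * g j, Set.mem_iUnion.2 ⟨i, mul_mem_AG hj le_rfl (by omega)⟩,
      (y - 1) * g j, Set.mem_iUnion.2 ⟨i, mul_mem_AG hj (by omega) (by omega)⟩, ?_⟩
    rw [← add_mul, Nat.add_sub_cancel' hy]
  -- A single digit `1` at `k + 1` is `g (k + 1) = g k + (d_{k+1} - 1) g k`, one level down.
  obtain rfl : y = 1 := le_antisymm hy1 hy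
  obtain ⟨k, rfl⟩ : ∃ k, j = k + 1 := Nat.exists_eq_succ_of_ne_zero (by
    rintro rfl
    simp [hg.2.1] at h2)
  obtain ⟨i', hk⟩ := Set.mem_iUnion.1 (hW ▸ Set.mem_univ k)
  have hd := hg.two_le_div k
  refine ⟨1 * g k, Set.mem_iUnion.2 ⟨i', mul_mem_AG hk le_rfl (by omega)⟩,
    (g (k + 1) / g k - 1) * g k, Set.mem_iUnion.2 ⟨i', mul_mem_AG hk (by omega) le_rfl⟩, ?_⟩
  rw [← add_mul, Nat.add_sub_cancel' (by omega), Nat.div_mul_cancel (hg.2.2 k), one_mul]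

theorem exists_add_eq_of_mem_iUnion_AG (hg : GadicSeq g) (hW : ⋃ i, W i = Set.univ) {a : ℕ}
    (ha : a ∈ ⋃ i, AG g (W i)) (h2 : 2 ≤ a) :
    ∃ b ∈ ⋃ i, AG g (W i), ∃ c ∈ ⋃ i, AG g (W i), b + c = a := by
  obtain ⟨i, F, x, hF, hFW, hx, rfl⟩ := Set.mem_iUnion.1 ha
  rcases hF.exists_eq_singleton_or_nontrivial with ⟨j, rfl⟩ | hF
  · rw [sum_singleton] at h2 ⊢
    have hj := mem_singleton_self j
    exact exists_add_eq_mul_of_mem hg hW (hFW hj) (hx j hj).1 (hx j hj).2 h2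
  · obtain ⟨j, hj⟩ := hF.nonempty
    refine ⟨x j * g j, Set.mem_iUnion.2 ⟨i, mul_mem_AG (hFW hj) (hx j hj).1 (hx j hj).2⟩,
      ∑ k ∈ F.erase j, x k * g k, Set.mem_iUnion.2 ⟨i, F.erase j, x, hF.erase_nonempty,
        subset_trans (coe_subset.2 (erase_subset j F)) hFW,
        fun k hk => hx k (mem_of_mem_erase hk), rfl⟩, add_sum_erase F (fun k => x k * g k) hj⟩

end Splitting

section Refinement

variable {A : Set ℕ}

theorem exists_card_succ_of_card_lt_sum (hA : ∀ a ∈ A, 2 ≤ a → ∃ b ∈ A, ∃ c ∈ A, b + c = a)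
    {s : Multiset ℕ} (hs : ∀ a ∈ s, a ∈ A) (hlt : Multiset.card s < s.sum) :
    ∃ t : Multiset ℕ, (∀ a ∈ t, a ∈ A) ∧ Multiset.card t = Multiset.card s + 1 ∧
      t.sum = s.sum := by
  obtain ⟨a, has, ha2⟩ : ∃ a ∈ s, 2 ≤ a := by
    by_contra! h
    have := Multiset.sum_le_card_nsmul s 1 fun a ha => Nat.le_of_lt_succ (h a ha)
    rw [smul_eq_mul, mul_one] at this
    omega
  obtain ⟨b, hb, c, hc, rfl⟩ := hA a (hs a has) ha2
  obtain ⟨s', rfl⟩ := Multiset.exists_cons_of_mem has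
  refine ⟨b ::ₘ c ::ₘ s', fun x hx => ?_, by simp, by simp [add_assoc]⟩
  rcases Multiset.mem_cons.1 hx with rfl | hx
  · exact hb
  rcases Multiset.mem_cons.1 hx with rfl | hx
  · exact hc
  exact hs x (Multiset.mem_cons_of_mem hx)

theorem exists_card_eq_of_card_le_of_le_sum
    (hA : ∀ a ∈ A, 2 ≤ a → ∃ b ∈ A, ∃ c ∈ A, b + c = a)
    {s : Multiset ℕ} (hs : ∀ a ∈ s, a ∈ A) {k : ℕ} (hsk : Multiset.card s ≤ k)
    (hk : k ≤ s.sum) :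
    ∃ t : Multiset ℕ, (∀ a ∈ t, a ∈ A) ∧ Multiset.card t = k ∧ t.sum = s.sum := by
  induction k, hsk using Nat.le_induction with
  | base => exact ⟨s, hs, rfl, rfl⟩
  | succ k _ ih =>
    obtain ⟨t, ht, rfl, hts⟩ := ih (by omega)
    obtain ⟨u, hu, hcard, hsum⟩ := exists_card_succ_of_card_lt_sum hA ht (by omega)
    exact ⟨u, hu, hcard, hsum.trans hts⟩

theorem isSumOf_card_sum {s : Multiset ℕ} (hs : ∀ a ∈ s, a ∈ A) :
    IsSumOf A (Multiset.card s) s.sum := by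
  induction s using Quotient.inductionOn with
  | h l =>
    refine ⟨fun i => l[i], fun i => hs _ (List.getElem_mem _), ?_⟩
    exact (Fin.sum_univ_getElem l).symm

end Refinement

theorem exists_multiset_card_le_of_iUnion_eq_univ {g : ℕ → ℕ} {ι : Type*} [Fintype ι]
    {W : ι → Set ℕ} (hg : GadicSeq g) (hW : ⋃ i, W i = Set.univ) (n : ℕ) :
    ∃ s : Multiset ℕ, (∀ a ∈ s, a ∈ ⋃ i, AG g (W i)) ∧ Multiset.card s ≤ Fintype.card ι ∧
      s.sum = n := by
  classical
  choose c hc using fun j => Set.mem_iUnion.1 (hW ▸ Set.mem_univ j)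
  -- Group the `𝒢`-adic digits of `n` according to the part `W i` their position lies in.
  let part : ι → ℕ := fun i => ∑ j ∈ range (n + 1) with c j = i, gadicDigit g n j * g j
  have hpart : ∀ i, part i ≠ 0 → part i ∈ AG g (W i) := fun i =>
    sum_mem_AG_of_ne_zero (fun j hj => (mem_filter.1 hj).2 ▸ hc j)
      (fun j _ => gadicDigit_le hg n j)
  refine ⟨({i | part i ≠ 0} : Finset ι).val.map part, fun a ha => ?_, ?_, ?_⟩
  · obtain ⟨i, hi, rfl⟩ := Multiset.mem_map.1 ha
    exact Set.mem_iUnion.2 ⟨i, hpart i (mem_filter.1 hi).2⟩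
  · rw [Multiset.card_map, card_val]
    exact card_filter_le _ _
  · rw [sum_map_val, sum_filter_ne_zero, sum_fiberwise (range (n + 1)) c,
      sum_gadicDigit_mul_eq_self hg]

theorem gadic_basis_with_zero_not_minimal_general (h : ℕ) (g : ℕ → ℕ) (hg : GadicSeq g)
    (W : Fin h → Set ℕ) (hW3 : ⋃ i, W i = Set.univ) :
    ¬ MinAsympBasis h ({0} ∪ ⋃ i, AG g (W i)) ∧
      AsympBasis h (({0} ∪ ⋃ i, AG g (W i)) \ {0}) := by
  have hzero : 0 ∉ ⋃ i, AG g (W i) := by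
    simp only [Set.mem_iUnion, not_exists]
    exact fun i h0 => lt_irrefl 0 (pos_of_mem_AG hg h0)
  have hA : ({0} ∪ ⋃ i, AG g (W i)) \ {0} = ⋃ i, AG g (W i) := by
    rw [Set.union_sdiff_left, Set.sdiff_singleton_eq_self hzero]
  have hbasis : AsympBasis h (⋃ i, AG g (W i)) := by
    refine ⟨h, fun n hn => ?_⟩
    obtain ⟨s, hs, hcard, rfl⟩ := exists_multiset_card_le_of_iUnion_eq_univ hg hW3 n
    rw [Fintype.card_fin] at hcard
    obtain ⟨t, ht, rfl, hts⟩ := exists_card_eq_of_card_le_of_le_sum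
      (fun a ha => exists_add_eq_of_mem_iUnion_AG hg hW3 ha) hs hcard hn
    exact hts ▸ isSumOf_card_sum ht
  refine ⟨fun hmin => hmin.2 _ (Set.sdiff_singleton_ssubset.2 (Or.inl rfl)) ?_, ?_⟩ <;>
    rwa [hA]

theorem gadic_basis_with_zero_not_minimal (h : ℕ) (hh : 2 ≤ h) (g : ℕ → ℕ) (hg : GadicSeq g)
    (W : Fin h → Set ℕ) (hW1 : ∀ i, (W i).Nonempty)
    (hW2 : ∀ i j, i ≠ j → Disjoint (W i) (W j))
    (hW3 : ⋃ i, W i = Set.univ) :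
    ¬ MinAsympBasis h ({0} ∪ ⋃ i, AG g (W i)) ∧
      AsympBasis h (({0} ∪ ⋃ i, AG g (W i)) \ {0}) :=
  gadic_basis_with_zero_not_minimal_general h g hg W hW3
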